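/- arXiv:2002.02727 — 3 statements merged into one kernel-verified Lean document; each statement's English description precedes it below -/
import Mathlib

section
/- Let B be a Noetherian local commutative ring with maximal ideal n, and let M be a B-module that is flat over B. Then the n-adic (separated) completion of M, i.e. the inverse limit of the modules M/n^i·M, is also a flat B-module. -/
/-!
Flatness of `M̂` can be tested on exact sequences `R^s -u→ R^r -g→ R` of free modules, and
`M̂ ⊗ R^r ≅ (M ⊗ R^r)^` naturally in `R^r`, so it suffices that completion keeps
`M ⊗ R^s → M ⊗ R^r → M ⊗ R` exact. This sequence is exact since `M` is flat, and flatness also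
transports the Artin–Rees lemma for the images `im u ⊆ R^r`, `im g ⊆ R` to their images in
`M ⊗ R^r`, `M ⊗ R`: the `I`-adic topology of the ambient module induces the `I`-adic topology on
them. Completion preserves exactness of such a sequence: a Cauchy sequence whose image tends to
zero can be corrected termwise into a Cauchy sequence of the kernel.
-/

open LinearMap TensorProduct

/-- The `I`-adic topology of the ambient module induces the `I`-adic topology on `K`. -/
def Submodule.IsArtinRees {R N : Type*} [CommRing R] [AddCommGroup N] [Module R N]
    (K : Submodule R N) (I : Ideal R) : Prop :=
  ∃ k, ∀ n, (I ^ (n + k) • ⊤ : Submodule R N) ⊓ K ≤ I ^ n • K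

section ArtinRees

variable {R : Type*} [CommRing R] (M : Type*) [AddCommGroup M] [Module R M]
variable {F F' : Type*} [AddCommGroup F] [Module R F] [AddCommGroup F'] [Module R F']

theorem Submodule.isArtinRees_of_finite [IsNoetherianRing R] [Module.Finite R F]
    (Q : Submodule R F) (I : Ideal R) : Q.IsArtinRees I := by
  obtain ⟨k, hk⟩ := I.exists_pow_inf_eq_pow_smul Q
  refine ⟨k, fun n ↦ ?_⟩
  rw [hk (n + k) (by omega), Nat.add_sub_cancel]
  exact smul_mono_right _ inf_le_right

theorem smul_top_le_ker_lTensor_mkQ (J : Ideal R) :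
    (J • ⊤ : Submodule R (M ⊗[R] F)) ≤ ker (lTensor M (J • ⊤ : Submodule R F).mkQ) := by
  refine Submodule.smul_le.mpr fun a ha y _ ↦ ?_
  have hzero : (J • ⊤ : Submodule R F).mkQ ∘ₗ (a • LinearMap.id (M := F)) = 0 := by
    ext f
    exact (Submodule.Quotient.mk_eq_zero _).mpr (Submodule.smul_mem_smul ha Submodule.mem_top)
  have hy : a • y = lTensor M (a • LinearMap.id) y := by rw [lTensor_smul, lTensor_id]; rfl
  rw [mem_ker, hy, ← lTensor_comp_apply, hzero, lTensor_zero, LinearMap.zero_apply]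

theorem range_lTensor_le_smul_top {J : Ideal R} {φ : F' →ₗ[R] F} (h : range φ ≤ J • ⊤) :
    range (lTensor M φ) ≤ J • ⊤ := by
  rintro _ ⟨t, rfl⟩
  induction t with
  | zero => simp
  | add t₁ t₂ h₁ h₂ => rw [map_add]; exact add_mem h₁ h₂
  | tmul m f =>
    have hmap : (J • ⊤ : Submodule R F).map (TensorProduct.mk R M F m) ≤ J • ⊤ := by
      rw [Submodule.map_smul'']
      exact smul_mono_right _ le_top
    exact hmap (Submodule.mem_map_of_mem (h (mem_range_self φ f)))

theorem Module.Flat.isArtinRees_range_lTensor [IsNoetherianRing R] [Module.Finite R F]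
    [Module.Flat R M] (I : Ideal R) (φ : F' →ₗ[R] F) : (range (lTensor M φ)).IsArtinRees I := by
  rw [lTensor_range]
  set Q := range φ
  obtain ⟨k, hk⟩ := Q.isArtinRees_of_finite I
  refine ⟨k, fun n x ⟨hx, w, hw⟩ ↦ ?_⟩
  subst hw
  have hQ : ker ((I ^ (n + k) • ⊤ : Submodule R F).mkQ ∘ₗ Q.subtype) ≤ I ^ n • ⊤ :=
    fun q hq ↦ (Submodule.mem_smul_top_iff _ _ _).mpr (hk n ⟨by simpa using hq, q.2⟩)
  have hw : lTensor M ((I ^ (n + k) • ⊤ : Submodule R F).mkQ ∘ₗ Q.subtype) w = 0 := by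
    rw [lTensor_comp_apply]
    exact smul_top_le_ker_lTensor_mkQ M _ hx
  -- flatness of `M`: the kernel of `M ⊗ Q → M ⊗ F ⧸ I ^ (n + k) F` is `M ⊗ (Q ⊓ I ^ (n + k) F)`
  obtain ⟨v, rfl⟩ := (Module.Flat.lTensor_exact M (exact_subtype_ker_map _) w).mp hw
  rw [← Submodule.map_top, ← Submodule.map_smul'']
  exact Submodule.mem_map_of_mem
    (range_lTensor_le_smul_top M (by rwa [Submodule.range_subtype]) (mem_range_self _ v))

end ArtinRees

namespace AdicCompletion

variable {R : Type*} [CommRing R] (I : Ideal R)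
variable {M N P : Type*} [AddCommGroup M] [Module R M] [AddCommGroup N] [Module R N]
  [AddCommGroup P] [Module R P]

theorem map_smul_apply (c : R) (f : M →ₗ[R] N) (x : AdicCompletion I M) :
    map I (c • f) x = c • map I f x := by
  induction x using AdicCompletion.induction_on with
  | h a => ext n; simp [val_smul]

theorem ker_map_le_range_map_subtype {g : N →ₗ[R] P} (hg : (range g).IsArtinRees I)
    (hK : (ker g).IsArtinRees I) : ker (map I g) ≤ range (map I (ker g).subtype) := by
  obtain ⟨kg, hkg⟩ := hg
  obtain ⟨kK, hkK⟩ := hK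
  intro x hx
  induction x using AdicCompletion.induction_on with | h b => ?_
  have hb (n : ℕ) : g (b n) ∈ (I ^ n • ⊤ : Submodule R P) := by
    simpa using congrArg (fun x ↦ x.val n) hx
  have hlift (n : ℕ) :
      ∃ d ∈ (I ^ (n + kK) • ⊤ : Submodule R N), g d = g (b (n + kK + kg)) := by
    have := hkg (n + kK) ⟨hb _, g.mem_range_self _⟩
    rwa [← Submodule.map_top, ← Submodule.map_smul''] at this
  -- Subtracting `d n` moves `b (n + kK + kg)` into `ker g`; the Artin–Rees property of `ker g`
  -- then makes the corrected sequence Cauchy in `ker g` itself.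
  choose d hd hgd using hlift
  set c : ℕ → N := fun n ↦ b (n + kK + kg) - d n
  have hc_ker (n : ℕ) : c n ∈ ker g := by simp [c, hgd]
  have hmono {i j : ℕ} (h : i ≤ j) :
      (I ^ j • ⊤ : Submodule R N) ≤ I ^ i • ⊤ :=
    Submodule.smul_mono_left (Ideal.pow_le_pow_right h)
  have hc (n : ℕ) : c n ≡ b (n + kK + kg) [SMOD (I ^ (n + kK) • ⊤ : Submodule R N)] := by
    simpa [SModEq.sub_mem, c] using hd n
  have hcb (n : ℕ) : c n ≡ b n [SMOD (I ^ n • ⊤ : Submodule R N)] :=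
    ((hc n).mono (hmono (by omega))).trans (b.2 (by omega)).symm
  have hcc (n : ℕ) : c n ≡ c (n + 1) [SMOD (I ^ (n + kK) • ⊤ : Submodule R N)] := by
    set U : Submodule R N := I ^ (n + kK) • ⊤
    calc c n ≡ b (n + kK + kg) [SMOD U] := hc n
      _ ≡ b (n + 1 + kK + kg) [SMOD U] := (b.2 (by omega)).mono (hmono (by omega))
      _ ≡ c (n + 1) [SMOD U] := ((hc (n + 1)).mono (hmono (by omega))).symm
  refine ⟨AdicCompletion.mk I _ (AdicCauchySequence.mk I _ (fun n ↦ ⟨c n, hc_ker n⟩)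
    fun n ↦ ?_), ?_⟩
  · rw [SModEq.sub_mem, Submodule.mem_smul_top_iff]
    exact hkK n ⟨SModEq.sub_mem.mp (hcc n), sub_mem (hc_ker n) (hc_ker (n + 1))⟩
  · ext n
    simpa [Submodule.Quotient.eq, SModEq.sub_mem] using hcb n

theorem map_exact_of_isArtinRees {f : M →ₗ[R] N} {g : N →ₗ[R] P} (hfg : Function.Exact f g)
    (hf : (range f).IsArtinRees I) (hg : (range g).IsArtinRees I) :
    Function.Exact (map I f) (map I g) := by
  have hrange : range (map I f) = range (map I (range f).subtype) := by
    conv_lhs => rw [show f = (range f).subtype ∘ₗ f.rangeRestrict from rfl, ← map_comp]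
    exact range_comp_of_range_eq_top _ (range_eq_top.mpr
      (map_surjective I (surjective_rangeRestrict f)))
  refine exact_of_comp_eq_zero_of_ker_le_range ?_ ?_
  · rw [map_comp, hfg.linearMap_comp_eq_zero, map_zero]
  · rw [hrange, ← (exact_iff.mp hfg)]
    exact ker_map_le_range_map_subtype I hg (exact_iff.mp hfg ▸ hf)

variable (M) (ι : Type*) [Fintype ι] [DecidableEq ι]

noncomputable def tensorPiEquiv :
    AdicCompletion I M ⊗[R] (ι → R) ≃ₗ[R] AdicCompletion I (M ⊗[R] (ι → R)) :=
  (piScalarRight R R (AdicCompletion I M) ι).trans <|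
    ((piEquivOfFintype I fun _ : ι ↦ M).symm.restrictScalars R).trans
      ((congr I (piScalarRight R R M ι).symm).restrictScalars R)

variable {M ι}

theorem tensorPiEquiv_tmul (x : AdicCompletion I M) (c : ι → R) :
    tensorPiEquiv I M ι (x ⊗ₜ c) = map I ((TensorProduct.mk R M (ι → R)).flip c) x := by
  apply (congr I (piScalarRight R R M ι)).injective
  apply (piEquivOfFintype I fun _ : ι ↦ M).injective
  ext i : 1
  have hcoord : LinearMap.proj i ∘ₗ (piScalarRight R R M ι).toLinearMap ∘ₗ
      (TensorProduct.mk R M (ι → R)).flip c = c i • LinearMap.id := by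
    ext m
    simp
  simp only [tensorPiEquiv, LinearEquiv.trans_apply, LinearEquiv.restrictScalars_apply,
    congr_apply, map_comp_apply, LinearEquiv.comp_symm, map_id, id_apply,
    LinearEquiv.apply_symm_apply, piEquivOfFintype_apply]
  rw [AdicCompletion.pi, LinearMap.pi_apply, map_comp_apply, hcoord, map_smul_apply, map_id,
    piScalarRight_apply, piScalarRightHom_tmul]
  rfl

theorem tensorPiEquiv_comp_lTensor {κ : Type*} [Fintype κ] [DecidableEq κ]
    (φ : (ι → R) →ₗ[R] (κ → R)) :
    (tensorPiEquiv I M κ).toLinearMap ∘ₗ lTensor (AdicCompletion I M) φ =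
      (map I (lTensor M φ)).restrictScalars R ∘ₗ (tensorPiEquiv I M ι).toLinearMap := by
  refine TensorProduct.ext' fun x c ↦ ?_
  simp only [LinearMap.comp_apply, lTensor_tmul, LinearEquiv.coe_coe, tensorPiEquiv_tmul,
    LinearMap.restrictScalars_apply, map_comp_apply]
  congr 2

theorem lTensor_exact_of_flat [IsNoetherianRing R] [Module.Flat R M] {ι κ ν : Type*}
    [Fintype ι] [DecidableEq ι] [Fintype κ] [DecidableEq κ] [Fintype ν] [DecidableEq ν]
    {u : (ι → R) →ₗ[R] (κ → R)} {g : (κ → R) →ₗ[R] (ν → R)} (hug : Function.Exact u g) :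
    Function.Exact (lTensor (AdicCompletion I M) u) (lTensor (AdicCompletion I M) g) :=
  (Function.Exact.iff_of_ladder_linearEquiv (tensorPiEquiv_comp_lTensor I u).symm
    (tensorPiEquiv_comp_lTensor I g).symm).mp <|
    map_exact_of_isArtinRees I (Module.Flat.lTensor_exact M hug)
      (Module.Flat.isArtinRees_range_lTensor M I u)
      (Module.Flat.isArtinRees_range_lTensor M I g)

end AdicCompletion

theorem Module.Flat.of_lTensor_exact_fin {R : Type*} [CommRing R] [IsNoetherianRing R]
    {N : Type*} [AddCommGroup N] [Module R N]
    (h : ∀ {s r : ℕ} {u : (Fin s → R) →ₗ[R] (Fin r → R)}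
      {g : (Fin r → R) →ₗ[R] (Fin 1 → R)},
      Function.Exact u g → Function.Exact (lTensor N u) (lTensor N g)) :
    Module.Flat R N := by
  refine Module.Flat.iff_lTensor_injective'.mpr fun J ↦ ?_
  obtain ⟨r, p, hp⟩ := Module.Finite.exists_fin' R J
  set g : (Fin r → R) →ₗ[R] (Fin 1 → R) :=
    (LinearEquiv.funUnique (Fin 1) R R).symm.toLinearMap ∘ₗ J.subtype ∘ₗ p
  obtain ⟨s, q, hq⟩ := Module.Finite.exists_fin' R (ker g)
  have hexact : Function.Exact ((ker g).subtype ∘ₗ q) g := by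
    rw [exact_iff, range_comp_of_range_eq_top _ (range_eq_top.mpr hq), Submodule.range_subtype]
  have hpq : p ∘ₗ (ker g).subtype ∘ₗ q = 0 := by
    refine LinearMap.ext fun a ↦ ?_
    simpa [g] using (q a).2
  rw [injective_iff_map_eq_zero]
  intro z hz
  obtain ⟨w, rfl⟩ := lTensor_surjective N hp z
  have hw : lTensor N g w = 0 := by
    rw [lTensor_comp, lTensor_comp, LinearMap.comp_apply, LinearMap.comp_apply, hz, map_zero]
  obtain ⟨v, rfl⟩ := (h hexact w).mp hw
  rw [← lTensor_comp_apply, hpq, lTensor_zero, LinearMap.zero_apply]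

/-- Let `B` be a Noetherian local commutative ring with maximal ideal `n`,
and let `M` be a `B`-module that is flat over `B`. Then the `n`-adic separated completion
of `M` (the inverse limit of the modules `M ⧸ n ^ i • M`) is also a flat `B`-module. -/
theorem flat_of_adicCompletion_of_flat (B : Type*) [CommRing B] [IsNoetherianRing B]
    [IsLocalRing B] (M : Type*) [AddCommGroup M] [Module B M] [Module.Flat B M] :
    Module.Flat B (AdicCompletion (IsLocalRing.maximalIdeal B) M) :=
  Module.Flat.of_lTensor_exact_fin (AdicCompletion.lTensor_exact_of_flat _)
end

section
/- Let A and B be commutative rings containing a field k, with Jacobson radicals m and n respectively, let C = A⊗_k B, r = m⊗_k B + A⊗_k n, and let E = A⊗̂_k B be the r-adic separated completion of C. If m and n are finitely generated ideals, then the closure r̂ of the image of r in E equals the extended ideal rE, and the topology of E (given by the closures of the powers r^i) coincides with the rE-adic topology, i.e. the closure of the image of r^i in E equals r^i·E for every i. -/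
open TensorProduct

/-- The ideal `r = m ⊗ B + A ⊗ n` of `C = A ⊗[k] B`, where `m` and `n` are the Jacobson
radicals of `A` and `B` (for a local ring, the Jacobson radical is the maximal ideal). -/
noncomputable def tensorRadical (k A B : Type*) [Field k] [CommRing A] [CommRing B]
    [Algebra k A] [Algebra k B] : Ideal (A ⊗[k] B) :=
  Ideal.map (Algebra.TensorProduct.includeLeft (R := k) (S := k) (A := A) (B := B))
      ((⊥ : Ideal A).jacobson) ⊔
    Ideal.map (Algebra.TensorProduct.includeRight (R := k) (A := A) (B := B))
      ((⊥ : Ideal B).jacobson)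

/-- The completed tensor product `A ⊗̂[k] B`: the `r`-adic separated completion of
`C = A ⊗[k] B`, i.e. the inverse limit of the rings `C ⧸ r ^ i`. -/
noncomputable abbrev CompletedTensor (k A B : Type*) [Field k] [CommRing A] [CommRing B]
    [Algebra k A] [Algebra k B] : Type _ :=
  AdicCompletion (tensorRadical k A B) (A ⊗[k] B)

theorem AdicCompletion.ker_evalₐ_eq_map {R : Type*} [CommRing R] {I : Ideal R} (hI : I.FG)
    (n : ℕ) :
    RingHom.ker (AdicCompletion.evalₐ I n) = (I ^ n).map (algebraMap R (AdicCompletion I R)) := by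
  ext x
  have hpow : (I ^ n • ⊤ : Ideal R) = I ^ n := by simp
  have hevalₐ : AdicCompletion.evalₐ I n x =
      Ideal.quotientEquivAlgOfEq R hpow (AdicCompletion.eval I R n x) := rfl
  rw [RingHom.mem_ker, hevalₐ, map_eq_zero_iff _ (AlgEquiv.injective _), ← LinearMap.mem_ker,
    ← AdicCompletion.pow_smul_top_eq_ker_eval hI, Ideal.smul_top_eq_map,
    Submodule.restrictScalars_mem]

theorem tensorRadical_fg (k A B : Type*) [Field k] [CommRing A] [CommRing B]
    [Algebra k A] [Algebra k B] (hm : ((⊥ : Ideal A).jacobson).FG)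
    (hn : ((⊥ : Ideal B).jacobson).FG) : (tensorRadical k A B).FG :=
  Submodule.FG.sup (hm.map _) (hn.map _)

/-- With `C = A ⊗[k] B`, `r = m ⊗ B + A ⊗ n` (`m`, `n` the Jacobson
radicals of `A`, `B`) and `E = A ⊗̂[k] B` the `r`-adic completion of `C`: if `m` and `n`
are finitely generated, then the closure `r̂` of the image of `r` in `E` (the kernel of
the canonical map `E → C ⧸ r`) equals the extended ideal `rE`, and more generally the
closure of the image of `r ^ i` in `E` (the kernel of `E → C ⧸ r ^ i`) equals `r ^ i · E`
for every `i`; i.e. the topology of `E` is the `rE`-adic topology. -/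
theorem closure_tensorRadical_pow_eq_map (k A B : Type*) [Field k]
    [CommRing A] [CommRing B] [Algebra k A] [Algebra k B]
    (hm : ((⊥ : Ideal A).jacobson).FG) (hn : ((⊥ : Ideal B).jacobson).FG) :
    RingHom.ker (AdicCompletion.evalₐ (tensorRadical k A B) 1) =
        Ideal.map (algebraMap (A ⊗[k] B) (CompletedTensor k A B)) (tensorRadical k A B) ∧
      ∀ i : ℕ,
        RingHom.ker (AdicCompletion.evalₐ (tensorRadical k A B) i) =
          Ideal.map (algebraMap (A ⊗[k] B) (CompletedTensor k A B))
            (tensorRadical k A B ^ i) := by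
  have hr := tensorRadical_fg k A B hm hn
  refine ⟨?_, AdicCompletion.ker_evalₐ_eq_map hr⟩
  rw [AdicCompletion.ker_evalₐ_eq_map hr 1, pow_one]
end

section
/- Let A and B be two semilocal Noetherian commutative rings containing a field k, with maximal ideals m_1,…,m_p of A and n_1,…,n_q of B. Then the completed tensor product A⊗̂_k B is isomorphic as a ring to the finite product over all pairs (r,s) of the completed tensor products A_{m_r} ⊗̂_k B_{n_s}, where A_{m_r} and B_{n_s} denote the localizations of A and B at m_r and n_s. -/
open TensorProduct

/-!
Fix a pair `p = (m, n)` of maximal ideals, write `C = A ⊗[k] B`, `C_p = A_m ⊗[k] B_n`, and let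
`r_p` be the radical ideal of `C_p`. The ring `C_p` is the localization of `C` at the products
`s ⊗ t` with `s ∉ m`, `t ∉ n`, and since `A` and `B` are semilocal, `r` generates `r_p`. It suffices
to show that every `C ⧸ r ^ i → ∏ₚ C_p ⧸ r_p ^ i` is bijective. A prime of `C` containing `r`
contracts to primes of `A` and `B` containing the Jacobson radicals, that is, to maximal ideals;
so if the images of `x` lie in every `r_p ^ i`, the ideal `(r ^ i : x)` meets every localizing
submonoid and is all of `C`. A prime containing the contraction of `r_p ^ i` contracts exactly to
`m` and `n`, so these contractions are pairwise comaximal and the `s ⊗ t` are invertible modulo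
them: surjectivity follows from the Chinese remainder theorem.
-/

namespace AdicCompletion

variable {R : Type*} [CommRing R] {I : Ideal R}

theorem evalₐ_eq_factorPow_evalₐ {m n : ℕ} (hle : m ≤ n) (x : AdicCompletion I R) :
    evalₐ I m x = Ideal.Quotient.factorPow I hle (evalₐ I n x) := by
  obtain ⟨a, rfl⟩ := mk_surjective I R x
  rw [evalₐ_mk, evalₐ_mk, Ideal.Quotient.factor_mk, Ideal.Quotient.eq, ← SModEq.sub_mem]
  simpa using a.property hle

theorem sub_mem_pow_of_mk_eq_evalₐ {m n : ℕ} (hmn : m ≤ n) {x : AdicCompletion I R} {a b : R}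
    (ha : Ideal.Quotient.mk (I ^ m) a = evalₐ I m x)
    (hb : Ideal.Quotient.mk (I ^ n) b = evalₐ I n x) : a - b ∈ I ^ m := by
  rw [← Ideal.Quotient.eq, ha, evalₐ_eq_factorPow_evalₐ hmn, ← hb]
  rfl

section mapRingHom

variable {S : Type*} [CommRing S] {J : Ideal S} {f : R →+* S}

theorem pow_le_comap_pow_of_map_le (hf : I.map f ≤ J) (n : ℕ) : I ^ n ≤ (J ^ n).comap f :=
  Ideal.map_le_iff_le_comap.mp (Ideal.map_pow f I n ▸ Ideal.pow_right_mono hf n)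

theorem factorPow_comp_quotientMap_comp_evalₐ (hf : I.map f ≤ J) {m n : ℕ} (hle : m ≤ n) :
    (Ideal.Quotient.factorPow J hle).comp
        ((Ideal.quotientMap (J ^ n) f (pow_le_comap_pow_of_map_le hf n)).comp
          (evalₐ I n : AdicCompletion I R →+* R ⧸ I ^ n)) =
      (Ideal.quotientMap (J ^ m) f (pow_le_comap_pow_of_map_le hf m)).comp (evalₐ I m) := by
  ext x
  obtain ⟨y, hy⟩ := Ideal.Quotient.mk_surjective (evalₐ I n x)
  simp only [RingHom.comp_apply, AlgHom.coe_toRingHom, evalₐ_eq_factorPow_evalₐ hle x, ← hy]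
  rfl

variable (f) in
noncomputable def mapRingHom (hf : I.map f ≤ J) : AdicCompletion I R →+* AdicCompletion J S :=
  liftRingHom J _ (factorPow_comp_quotientMap_comp_evalₐ hf)

@[simp]
theorem evalₐ_mapRingHom (hf : I.map f ≤ J) (n : ℕ) (x : AdicCompletion I R) :
    evalₐ J n (mapRingHom f hf x) =
      Ideal.quotientMap (J ^ n) f (pow_le_comap_pow_of_map_le hf n) (evalₐ I n x) :=
  evalₐ_liftRingHom _ _ _ _ _

end mapRingHom

variable {ι : Type*} {S : ι → Type*} [∀ i, CommRing (S i)] {J : ∀ i, Ideal (S i)}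

theorem bijective_pi_mapRingHom (f : ∀ i, R →+* S i) (hf : ∀ i, I.map (f i) ≤ J i)
    (hinj : ∀ n x, (∀ i, f i x ∈ J i ^ n) → x ∈ I ^ n)
    (hsurj : ∀ n (z : ∀ i, S i), ∃ x, ∀ i, f i x - z i ∈ J i ^ n) :
    Function.Bijective (RingHom.pi fun i ↦ mapRingHom (f i) (hf i)) := by
  constructor
  · intro x y hxy
    refine ext_evalₐ fun n ↦ ?_
    obtain ⟨a, ha⟩ := Ideal.Quotient.mk_surjective (evalₐ I n x)
    obtain ⟨b, hb⟩ := Ideal.Quotient.mk_surjective (evalₐ I n y)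
    rw [← ha, ← hb, Ideal.Quotient.eq]
    refine hinj n _ fun i ↦ ?_
    have h := congrArg (evalₐ (J i) n) (congrFun hxy i)
    simp only [RingHom.pi_apply, evalₐ_mapRingHom, ← ha, ← hb, Ideal.quotientMap_mk] at h
    rw [map_sub]
    exact Ideal.Quotient.eq.mp h
  · intro y
    choose z hz using fun n i ↦ Ideal.Quotient.mk_surjective (evalₐ (J i) n (y i))
    choose x hx using fun n ↦ hsurj n (z n)
    have hcauchy : IsAdicCauchy I R x := fun {m n} hmn ↦ by
      rw [SModEq.sub_mem, smul_eq_mul, Ideal.mul_top]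
      refine hinj m _ fun i ↦ ?_
      have h : f i (x m - x n) =
          (f i (x m) - z m i) - (f i (x n) - z n i) + (z m i - z n i) := by
        rw [map_sub]; ring
      rw [h]
      exact add_mem (sub_mem (hx m i) (Ideal.pow_le_pow_right hmn (hx n i)))
        (sub_mem_pow_of_mk_eq_evalₐ hmn (hz m i) (hz n i))
    obtain ⟨a, rfl⟩ : ∃ a : AdicCauchySequence I R, a.val = x := ⟨⟨x, hcauchy⟩, rfl⟩
    refine ⟨mk I R a, funext fun i ↦ ext_evalₐ fun n ↦ ?_⟩
    rw [RingHom.pi_apply, evalₐ_mapRingHom, evalₐ_mk, Ideal.quotientMap_mk, ← hz,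
      Ideal.Quotient.eq]
    exact hx n i

end AdicCompletion

namespace Algebra.TensorProduct

section tmulSubmonoid

variable {k A B : Type*} [CommRing k] [CommRing A] [CommRing B] [Algebra k A] [Algebra k B]

theorem tmul_eq_tmul_one_mul_one_tmul (a : A) (b : B) :
    a ⊗ₜ[k] b = (a ⊗ₜ[k] (1 : B)) * ((1 : A) ⊗ₜ[k] b) := by
  simp

theorem tmul_notMem_of_notMem_comap {P : Ideal (A ⊗[k] B)} [P.IsPrime] {s : A} {t : B}
    (hs : s ∉ P.comap (includeLeft (S := k))) (ht : t ∉ P.comap (includeRight (R := k))) :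
    s ⊗ₜ[k] t ∉ P := by
  rw [tmul_eq_tmul_one_mul_one_tmul]
  exact fun h ↦ (Ideal.IsPrime.mem_or_mem ‹_› h).elim hs ht

variable (k) in
def tmulSubmonoid (M : Submonoid A) (N : Submonoid B) : Submonoid (A ⊗[k] B) :=
  M.map (includeLeft (S := k)) ⊔ N.map includeRight

variable {M : Submonoid A} {N : Submonoid B}

theorem mem_tmulSubmonoid {x : A ⊗[k] B} :
    x ∈ tmulSubmonoid k M N ↔ ∃ s ∈ M, ∃ t ∈ N, s ⊗ₜ[k] t = x := by
  simp [tmulSubmonoid, Submonoid.mem_sup]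

theorem tmul_mem_tmulSubmonoid {s : A} {t : B} (hs : s ∈ M) (ht : t ∈ N) :
    s ⊗ₜ[k] t ∈ tmulSubmonoid k M N :=
  mem_tmulSubmonoid.mpr ⟨s, hs, t, ht, rfl⟩

end tmulSubmonoid

variable {k A B A' B' : Type*} [CommRing k] [CommRing A] [CommRing B] [CommRing A']
  [CommRing B'] [Algebra k A] [Algebra k B] [Algebra k A'] [Algebra k B'] [Algebra A A']
  [Algebra B B'] [IsScalarTower k A A'] [IsScalarTower k B B']

theorem exists_tmul_one_mul_eq_zero_of_map_eq_zero (M : Submonoid A) [IsLocalization M A']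
    {y : A ⊗[k] B}
    (hy : map (IsScalarTower.toAlgHom k A A') (AlgHom.id k B) y = 0) :
    ∃ s ∈ M, (s ⊗ₜ[k] (1 : B)) * y = 0 := by
  let := (map (IsScalarTower.toAlgHom k A A') (AlgHom.id k B)).toAlgebra
  have : IsScalarTower A (A ⊗[k] B) (A' ⊗[k] B) := .of_algebraMap_eq fun a ↦ by
    simp [RingHom.algebraMap_toAlgebra]
  have := IsLocalization.tensorProduct_tensorProduct k B M A'
    (by ext; simp [RingHom.algebraMap_toAlgebra])
  obtain ⟨⟨_, s, hs, rfl⟩, h⟩ :=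
    (IsLocalization.map_eq_zero_iff (algebraMapSubmonoid (A ⊗[k] B) M) (A' ⊗[k] B) y).mp hy
  exact ⟨s, hs, h⟩

theorem exists_one_tmul_mul_eq_zero_of_map_eq_zero (N : Submonoid B) [IsLocalization N B']
    {y : A ⊗[k] B}
    (hy : map (AlgHom.id k A) (IsScalarTower.toAlgHom k B B') y = 0) :
    ∃ t ∈ N, ((1 : A) ⊗ₜ[k] t) * y = 0 := by
  let := (map (AlgHom.id k A) (IsScalarTower.toAlgHom k B B')).toAlgebra
  have : IsScalarTower A (A ⊗[k] B) (A ⊗[k] B') := .of_algebraMap_eq fun a ↦ by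
    simp [RingHom.algebraMap_toAlgebra]
  have := IsLocalization.tensorProduct_tensorProduct_right k A N B'
    (by ext; simp [RingHom.algebraMap_toAlgebra])
  obtain ⟨⟨_, t, ht, rfl⟩, h⟩ :=
    (IsLocalization.map_eq_zero_iff (N.map includeRight) (A ⊗[k] B') y).mp hy
  exact ⟨t, ht, h⟩

theorem isLocalizationMap_map (M : Submonoid A) (N : Submonoid B) [IsLocalization M A']
    [IsLocalization N B'] :
    (tmulSubmonoid k M N).IsLocalizationMap
      (map (IsScalarTower.toAlgHom k A A') (IsScalarTower.toAlgHom k B B')) where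
  map_units := by
    rintro ⟨_, hx⟩
    obtain ⟨s, hs, t, ht, rfl⟩ := mem_tmulSubmonoid.mp hx
    rw [map_tmul, tmul_eq_tmul_one_mul_one_tmul]
    exact ((IsLocalization.map_units A' ⟨s, hs⟩).map (includeLeft (R := k) (S := k))).mul
      ((IsLocalization.map_units B' ⟨t, ht⟩).map (includeRight (R := k)))
  surj z := by
    induction z with
    | zero => exact ⟨(0, 1), by simp⟩
    | tmul a b =>
      obtain ⟨⟨a, s⟩, ha⟩ := IsLocalization.surj M a
      obtain ⟨⟨b, t⟩, hb⟩ := IsLocalization.surj N b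
      exact ⟨(a ⊗ₜ b, ⟨_, tmul_mem_tmulSubmonoid s.2 t.2⟩), by simp [ha, hb]⟩
    | add z w hz hw =>
      obtain ⟨⟨x, s⟩, hx⟩ := hz
      obtain ⟨⟨y, t⟩, hy⟩ := hw
      refine ⟨(x * t + y * s, s * t), ?_⟩
      simp only [Submonoid.coe_mul, map_add, map_mul, ← hx, ← hy]
      ring
  exists_of_eq {x y} h := by
    have hφ : map (IsScalarTower.toAlgHom k A A') (IsScalarTower.toAlgHom k B B') =
        (map (AlgHom.id k A') (IsScalarTower.toAlgHom k B B')).comp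
          (map (IsScalarTower.toAlgHom k A A') (AlgHom.id k B)) := by
      ext <;> simp
    rw [← sub_eq_zero, ← map_sub, hφ, AlgHom.comp_apply] at h
    obtain ⟨t, ht, h⟩ := exists_one_tmul_mul_eq_zero_of_map_eq_zero N h
    have h1 : (1 : A') ⊗ₜ[k] t =
        map (IsScalarTower.toAlgHom k A A') (AlgHom.id k B) (1 ⊗ₜ t) := by
      simp
    rw [h1, ← map_mul] at h
    obtain ⟨s, hs, h⟩ := exists_tmul_one_mul_eq_zero_of_map_eq_zero M h
    refine ⟨⟨_, tmul_mem_tmulSubmonoid hs ht⟩, ?_⟩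
    rw [← sub_eq_zero, ← mul_sub]
    show s ⊗ₜ[k] t * (x - y) = 0
    rwa [tmul_eq_tmul_one_mul_one_tmul, mul_assoc]

theorem exists_tmul_mul_mem_of_map_mem_map (M : Submonoid A) (N : Submonoid B)
    [IsLocalization M A'] [IsLocalization N B'] (I : Ideal (A ⊗[k] B)) {x : A ⊗[k] B}
    (hx : map (IsScalarTower.toAlgHom k A A') (IsScalarTower.toAlgHom k B B') x ∈
      I.map (map (IsScalarTower.toAlgHom k A A') (IsScalarTower.toAlgHom k B B'))) :
    ∃ s ∈ M, ∃ t ∈ N, s ⊗ₜ[k] t * x ∈ I := by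
  let := (map (IsScalarTower.toAlgHom k A A') (IsScalarTower.toAlgHom k B B')).toAlgebra
  have : IsLocalization (tmulSubmonoid k M N) (A' ⊗[k] B') :=
    (isLocalization_iff_isLocalizationMap _ _).mpr (isLocalizationMap_map M N)
  obtain ⟨_, hm, h⟩ :=
    (IsLocalization.algebraMap_mem_map_algebraMap_iff (tmulSubmonoid k M N) _ I x).mp hx
  obtain ⟨s, hs, t, ht, rfl⟩ := mem_tmulSubmonoid.mp hm
  exact ⟨s, hs, t, ht, h⟩

end Algebra.TensorProduct

theorem Ideal.exists_mul_sub_one_mem_of_forall_isMaximal {R : Type*} [CommRing R] {Q : Ideal R}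
    {x : R} (h : ∀ P : Ideal R, P.IsMaximal → Q ≤ P → x ∉ P) : ∃ a, a * x - 1 ∈ Q := by
  have htop : Ideal.span {x} ⊔ Q = ⊤ := by
    by_contra hne
    obtain ⟨P, hP, hle⟩ := Ideal.exists_le_maximal _ hne
    exact h P hP (le_sup_right.trans hle)
      (hle (Ideal.mem_sup_left (Ideal.mem_span_singleton_self x)))
  obtain ⟨_, hy, q, hq, hyq⟩ := Submodule.mem_sup.mp (htop ▸ Submodule.mem_top : (1 : R) ∈ _)
  obtain ⟨a, rfl⟩ := Ideal.mem_span_singleton'.mp hy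
  exact ⟨a, by rw [← hyq, sub_add_cancel_left]; exact neg_mem hq⟩

section Semilocal

variable {A : Type*} [CommRing A]

theorem mem_jacobson_bot_iff_forall_mem_maximalSpectrum {x : A} :
    x ∈ (⊥ : Ideal A).jacobson ↔ ∀ v : MaximalSpectrum A, x ∈ v.asIdeal :=
  ⟨fun h v ↦ Ideal.mem_sInf.mp h ⟨bot_le, v.isMaximal⟩,
    fun h ↦ Ideal.mem_sInf.mpr fun I hI ↦ h ⟨I, hI.2⟩⟩

theorem Ideal.IsPrime.exists_maximalSpectrum_eq_of_inf_le {P : Ideal A} (hP : P.IsPrime)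
    {s : Finset (MaximalSpectrum A)} (h : s.inf (fun v ↦ v.asIdeal) ≤ P) :
    ∃ v ∈ s, v.asIdeal = P := by
  obtain ⟨v, hv, hle⟩ := hP.inf_le'.mp h
  exact ⟨v, hv, v.isMaximal.eq_of_le hP.ne_top hle⟩

theorem algebraMap_mem_jacobson_bot_localization_atPrime (v : MaximalSpectrum A) {x : A}
    (hx : x ∈ v.asIdeal) :
    algebraMap A (Localization.AtPrime v.asIdeal) x ∈ (⊥ : Ideal _).jacobson := by
  rw [IsLocalRing.jacobson_eq_maximalIdeal ⊥ bot_ne_top]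
  exact (IsLocalization.AtPrime.to_map_mem_maximal_iff _ v.asIdeal x).mpr hx

variable [Finite (MaximalSpectrum A)]

theorem Ideal.IsPrime.isMaximal_of_jacobson_bot_le {P : Ideal A} (hP : P.IsPrime)
    (h : (⊥ : Ideal A).jacobson ≤ P) : P.IsMaximal := by
  classical
  cases nonempty_fintype (MaximalSpectrum A)
  refine (hP.exists_maximalSpectrum_eq_of_inf_le (s := Finset.univ)
    (le_trans (fun x hx ↦ ?_) h)).elim fun v hv ↦ hv.2 ▸ v.isMaximal
  exact mem_jacobson_bot_iff_forall_mem_maximalSpectrum.mpr fun v ↦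
    Finset.inf_le (f := fun v : MaximalSpectrum A ↦ v.asIdeal) (Finset.mem_univ v) hx

theorem MaximalSpectrum.exists_notMem_forall_ne_mem (v : MaximalSpectrum A) :
    ∃ u ∉ v.asIdeal, ∀ w ≠ v, u ∈ w.asIdeal := by
  classical
  cases nonempty_fintype (MaximalSpectrum A)
  obtain ⟨u, hu, huv⟩ := SetLike.not_le_iff_exists.mp fun
      (h : (Finset.univ.erase v).inf (fun w ↦ w.asIdeal) ≤ v.asIdeal) ↦ by
    obtain ⟨w, hw, hwv⟩ := v.isMaximal.isPrime.exists_maximalSpectrum_eq_of_inf_le h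
    exact (Finset.mem_erase.mp hw).1 (MaximalSpectrum.ext hwv)
  exact ⟨u, huv, fun w hw ↦ Finset.inf_le (f := fun v : MaximalSpectrum A ↦ v.asIdeal)
    (Finset.mem_erase.mpr ⟨hw, Finset.mem_univ w⟩) hu⟩

theorem map_jacobson_bot_localization_atPrime (v : MaximalSpectrum A) :
    (⊥ : Ideal A).jacobson.map (algebraMap A (Localization.AtPrime v.asIdeal)) =
      IsLocalRing.maximalIdeal (Localization.AtPrime v.asIdeal) := by
  rw [← Localization.AtPrime.map_eq_maximalIdeal]
  refine le_antisymm (Ideal.map_mono fun x hx ↦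
    mem_jacobson_bot_iff_forall_mem_maximalSpectrum.mp hx v) (Ideal.map_le_iff_le_comap.mpr ?_)
  intro x hx
  obtain ⟨u, hu, hu'⟩ := v.exists_notMem_forall_ne_mem
  have hux : u * x ∈ (⊥ : Ideal A).jacobson := by
    refine mem_jacobson_bot_iff_forall_mem_maximalSpectrum.mpr fun w ↦ ?_
    obtain rfl | hw := eq_or_ne w v
    · exact Ideal.mul_mem_left _ _ hx
    · exact Ideal.mul_mem_right _ _ (hu' w hw)
  have := Ideal.mem_map_of_mem (algebraMap A (Localization.AtPrime v.asIdeal)) hux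
  rw [map_mul] at this
  exact (Ideal.unit_mul_mem_iff_mem _ (IsLocalization.map_units (Localization.AtPrime v.asIdeal)
    (⟨u, hu⟩ : v.asIdeal.primeCompl))).mp this

end Semilocal

section TensorRadical

open Algebra.TensorProduct Function

variable (k : Type*) [Field k] {A B : Type*} [CommRing A] [CommRing B] [Algebra k A]
  [Algebra k B]

theorem tmul_one_mem_tensorRadical {a : A} (ha : a ∈ (⊥ : Ideal A).jacobson) :
    a ⊗ₜ[k] (1 : B) ∈ tensorRadical k A B :=
  Ideal.mem_sup_left (Ideal.mem_map_of_mem _ ha)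

theorem one_tmul_mem_tensorRadical {b : B} (hb : b ∈ (⊥ : Ideal B).jacobson) :
    (1 : A) ⊗ₜ[k] b ∈ tensorRadical k A B :=
  Ideal.mem_sup_right (Ideal.mem_map_of_mem _ hb)

abbrev tensorLocalizationMap (p : MaximalSpectrum A × MaximalSpectrum B) :
    A ⊗[k] B →ₐ[k] Localization.AtPrime p.1.asIdeal ⊗[k] Localization.AtPrime p.2.asIdeal :=
  map (IsScalarTower.toAlgHom k A _) (IsScalarTower.toAlgHom k B _)

theorem map_tensorLocalizationMap_tensorRadical [Finite (MaximalSpectrum A)]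
    [Finite (MaximalSpectrum B)] (p : MaximalSpectrum A × MaximalSpectrum B) :
    (tensorRadical k A B).map (tensorLocalizationMap k p) =
      tensorRadical k (Localization.AtPrime p.1.asIdeal) (Localization.AtPrime p.2.asIdeal) := by
  rw [tensorRadical, tensorRadical, Ideal.map_sup, Ideal.map_mapₐ, Ideal.map_mapₐ,
    map_comp_includeLeft, map_comp_includeRight, ← Ideal.map_mapₐ, ← Ideal.map_mapₐ,
    ← Ideal.map_coe (IsScalarTower.toAlgHom k A _),
    ← Ideal.map_coe (IsScalarTower.toAlgHom k B _), IsScalarTower.coe_toAlgHom,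
    IsScalarTower.coe_toAlgHom, map_jacobson_bot_localization_atPrime,
    map_jacobson_bot_localization_atPrime, IsLocalRing.jacobson_eq_maximalIdeal ⊥ bot_ne_top,
    IsLocalRing.jacobson_eq_maximalIdeal ⊥ bot_ne_top]

noncomputable abbrev comapTensorRadicalPow (n : ℕ)
    (p : MaximalSpectrum A × MaximalSpectrum B) : Ideal (A ⊗[k] B) :=
  (tensorRadical k (Localization.AtPrime p.1.asIdeal)
    (Localization.AtPrime p.2.asIdeal) ^ n).comap (tensorLocalizationMap k p)

theorem comap_includeLeft_eq_and_comap_includeRight_eq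
    {p : MaximalSpectrum A × MaximalSpectrum B} {n : ℕ} {P : Ideal (A ⊗[k] B)} [P.IsPrime]
    (h : comapTensorRadicalPow k n p ≤ P) :
    P.comap (includeLeft (S := k)) = p.1.asIdeal ∧
      P.comap (includeRight (R := k)) = p.2.asIdeal := by
  have hr := Ideal.IsPrime.le_of_pow_le ((Ideal.le_comap_pow _ n).trans h)
  constructor
  · refine (p.1.isMaximal.eq_of_le (Ideal.comap_isPrime _ P).ne_top fun a ha ↦ hr ?_).symm
    rw [Ideal.mem_comap, includeLeft_apply, Algebra.TensorProduct.map_tmul, map_one]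
    exact tmul_one_mem_tensorRadical k (algebraMap_mem_jacobson_bot_localization_atPrime p.1 ha)
  · refine (p.2.isMaximal.eq_of_le (Ideal.comap_isPrime _ P).ne_top fun b hb ↦ hr ?_).symm
    rw [Ideal.mem_comap, includeRight_apply, Algebra.TensorProduct.map_tmul, map_one]
    exact one_tmul_mem_tensorRadical k (algebraMap_mem_jacobson_bot_localization_atPrime p.2 hb)

theorem pairwise_isCoprime_comapTensorRadicalPow (n : ℕ) :
    Pairwise (IsCoprime on comapTensorRadicalPow k (A := A) (B := B) n) := by
  intro p q hpq
  rw [onFun, Ideal.isCoprime_iff_sup_eq]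
  by_contra hne
  obtain ⟨P, hP, hle⟩ := Ideal.exists_le_maximal _ hne
  have := hP.isPrime
  obtain ⟨hp₁, hp₂⟩ := comap_includeLeft_eq_and_comap_includeRight_eq k (le_sup_left.trans hle)
  obtain ⟨hq₁, hq₂⟩ := comap_includeLeft_eq_and_comap_includeRight_eq k (le_sup_right.trans hle)
  exact hpq (Prod.ext (MaximalSpectrum.ext (hp₁.symm.trans hq₁))
    (MaximalSpectrum.ext (hp₂.symm.trans hq₂)))

theorem exists_tensorLocalizationMap_sub_mem (p : MaximalSpectrum A × MaximalSpectrum B) (n : ℕ)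
    (z : Localization.AtPrime p.1.asIdeal ⊗[k] Localization.AtPrime p.2.asIdeal) :
    ∃ c, tensorLocalizationMap k p c - z ∈ tensorRadical k (Localization.AtPrime p.1.asIdeal)
      (Localization.AtPrime p.2.asIdeal) ^ n := by
  obtain ⟨⟨c, m⟩, hz⟩ :=
    (isLocalizationMap_map p.1.asIdeal.primeCompl p.2.asIdeal.primeCompl).surj z
  obtain ⟨a, ha⟩ := Ideal.exists_mul_sub_one_mem_of_forall_isMaximal (x := (m : A ⊗[k] B))
    fun P hP hle ↦ by
      have := hP.isPrime
      obtain ⟨s, hs, t, ht, hst⟩ := mem_tmulSubmonoid.mp m.2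
      obtain ⟨h₁, h₂⟩ := comap_includeLeft_eq_and_comap_includeRight_eq k hle
      rw [← hst]
      exact tmul_notMem_of_notMem_comap (h₁ ▸ hs) (h₂ ▸ ht)
  refine ⟨a * c, ?_⟩
  have h : tensorLocalizationMap k p (a * c) - z = z * tensorLocalizationMap k p (a * m - 1) := by
    rw [map_mul, ← hz, map_sub, map_mul, map_one]
    ring
  rw [h]
  exact Ideal.mul_mem_left _ _ ha

theorem exists_forall_tensorLocalizationMap_sub_mem [Finite (MaximalSpectrum A)]
    [Finite (MaximalSpectrum B)] (n : ℕ)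
    (z : ∀ p : MaximalSpectrum A × MaximalSpectrum B,
      Localization.AtPrime p.1.asIdeal ⊗[k] Localization.AtPrime p.2.asIdeal) :
    ∃ x, ∀ p, tensorLocalizationMap k p x - z p ∈ tensorRadical k
      (Localization.AtPrime p.1.asIdeal) (Localization.AtPrime p.2.asIdeal) ^ n := by
  choose c hc using fun p ↦ exists_tensorLocalizationMap_sub_mem k p n (z p)
  obtain ⟨x, hx⟩ :=
    Ideal.exists_forall_sub_mem_ideal (pairwise_isCoprime_comapTensorRadicalPow k n) c
  refine ⟨x, fun p ↦ ?_⟩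
  have := add_mem (Ideal.mem_comap.mp (hx p)) (hc p)
  rwa [map_sub, sub_add_sub_cancel] at this

theorem mem_tensorRadical_pow_of_forall_tensorLocalizationMap_mem [Finite (MaximalSpectrum A)]
    [Finite (MaximalSpectrum B)] {n : ℕ} {x : A ⊗[k] B}
    (h : ∀ p, tensorLocalizationMap k p x ∈ tensorRadical k (Localization.AtPrime p.1.asIdeal)
      (Localization.AtPrime p.2.asIdeal) ^ n) :
    x ∈ tensorRadical k A B ^ n := by
  by_contra hx
  obtain ⟨P, hP, hle⟩ := Ideal.exists_le_maximal ((tensorRadical k A B ^ n).colon {x}) (by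
    rwa [Ne, Ideal.eq_top_iff_one, Submodule.mem_colon_singleton, one_smul])
  have := hP.isPrime
  have hr : tensorRadical k A B ≤ P := Ideal.IsPrime.le_of_pow_le (le_trans (fun y hy ↦
    Submodule.mem_colon_singleton.mpr (Ideal.mul_mem_right _ _ hy)) hle)
  have hA : (P.comap (includeLeft (S := k))).IsMaximal :=
    (Ideal.comap_isPrime _ _).isMaximal_of_jacobson_bot_le fun a ha ↦
      hr (tmul_one_mem_tensorRadical k ha)
  have hB : (P.comap (includeRight (R := k))).IsMaximal :=
    (Ideal.comap_isPrime _ _).isMaximal_of_jacobson_bot_le fun b hb ↦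
      hr (one_tmul_mem_tensorRadical k hb)
  let p : MaximalSpectrum A × MaximalSpectrum B := (⟨_, hA⟩, ⟨_, hB⟩)
  obtain ⟨s, hs, t, ht, hst⟩ := exists_tmul_mul_mem_of_map_mem_map p.1.asIdeal.primeCompl
    p.2.asIdeal.primeCompl (tensorRadical k A B ^ n) (x := x) (by
      rw [Ideal.map_pow, map_tensorLocalizationMap_tensorRadical]
      exact h p)
  exact tmul_notMem_of_notMem_comap hs ht (hle (Submodule.mem_colon_singleton.mpr hst))

end TensorRadical

theorem completedTensor_ringEquiv_pi_localization_general (k A B : Type*) [Field k]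
    [CommRing A] [CommRing B]
    [Algebra k A] [Algebra k B]
    [Finite (MaximalSpectrum A)] [Finite (MaximalSpectrum B)] :
    Nonempty
      (CompletedTensor k A B ≃+*
        ∀ pq : MaximalSpectrum A × MaximalSpectrum B,
          CompletedTensor k (Localization.AtPrime pq.1.asIdeal)
            (Localization.AtPrime pq.2.asIdeal)) := by
  have h := AdicCompletion.bijective_pi_mapRingHom
    (S := fun p : MaximalSpectrum A × MaximalSpectrum B ↦
      Localization.AtPrime p.1.asIdeal ⊗[k] Localization.AtPrime p.2.asIdeal)
    (J := fun p ↦ tensorRadical k (Localization.AtPrime p.1.asIdeal)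
      (Localization.AtPrime p.2.asIdeal))
    (fun p ↦ (tensorLocalizationMap k p).toRingHom)
    (fun p ↦ (map_tensorLocalizationMap_tensorRadical k p).le)
    (fun _ _ ↦ mem_tensorRadical_pow_of_forall_tensorLocalizationMap_mem k)
    (exists_forall_tensorLocalizationMap_sub_mem k)
  exact ⟨RingEquiv.ofBijective _ h⟩

/-- Let `A` and `B` be two semilocal Noetherian commutative rings
containing a field `k`, with maximal ideals `m_1, …, m_p` (of `A`) and `n_1, …, n_q`
(of `B`). Then `A ⊗̂[k] B` is isomorphic, as a ring, to the finite product over all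
pairs `(r, s)` of the completed tensor products `A_{m_r} ⊗̂[k] B_{n_s}` of the
localizations. -/
theorem completedTensor_ringEquiv_pi_localization (k A B : Type*) [Field k]
    [CommRing A] [CommRing B] [IsNoetherianRing A] [IsNoetherianRing B]
    [Algebra k A] [Algebra k B]
    [Finite (MaximalSpectrum A)] [Finite (MaximalSpectrum B)] :
    Nonempty
      (CompletedTensor k A B ≃+*
        ∀ pq : MaximalSpectrum A × MaximalSpectrum B,
          CompletedTensor k (Localization.AtPrime pq.1.asIdeal)
            (Localization.AtPrime pq.2.asIdeal)) :=
  completedTensor_ringEquiv_pi_localization_general k A B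
end
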